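/- arXiv:2408.16511 — 4 statements merged into one kernel-verified Lean document; each statement's English description precedes it below -/
import Mathlib

section
/- Let (å_k)_{k=−S}^{S} be real numbers, m ∈ ℕ with m ≥ 1, and φ ∈ ℝ. Define the m×m matrix L(φ) with entries L(φ)_{jk} = Σ_{ζ∈ℤ} å_{ζm+k−j} exp(iφ m ζ) (setting å_p = 0 for |p| > S), and let λ̊(ψ) = Σ_{k=−S}^{S} å_k exp(iψk). Then L(φ) = S_m(φ) · diag(λ̊(φ + 2πl/m), l = 0,…,m−1) · S_m(φ)^{-1}, where S_m(φ) is the unitary matrix with entries m^{-1/2} exp(2πi jk/m + iφ j). -/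
open Matrix Complex
open scoped Real

/-!
The `k`-th column of `S_m(φ)` samples the plane wave `q ↦ e^{iψq}`, `ψ = φ + 2πk/m`, at
`q = 0, …, m - 1`, and the factor `e^{iφmζ}` in `L(φ)` is exactly what this wave picks up under the
shift `q ↦ q + ζm` (as `e^{2πikζ} = 1`). So applying `L(φ)` to the column reassembles, through
`Fin m × ℤ ≃ ℤ` (division with remainder by `m`), the full convolution
`∑_p å_p e^{iψ(p+j)} = λ̊(ψ) e^{iψj}`: the column is an eigenvector with eigenvalue `λ̊(ψ)`.
Orthogonality of the `m`-th roots of unity makes `S_m(φ)` unitary, which identifies its inverse.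
-/

theorem Int.sum_fin_tsum_mul_add {R : Type*} [AddCommGroup R] [UniformSpace R]
    [IsUniformAddGroup R] [CompleteSpace R] [T0Space R] {f : ℤ → R} (hf : Summable f)
    (m : ℕ) [NeZero m] :
    ∑ l : Fin m, ∑' ζ : ℤ, f (ζ * m + (l : ℕ)) = ∑' q, f q := by
  let e : Fin m × ℤ ≃ ℤ := ((Int.divModEquiv m).trans (Equiv.prodComm _ _)).symm
  have hs : Summable fun p => f (e p) := hf.comp_injective e.injective
  rw [← e.tsum_eq f, hs.tsum_prod, tsum_fintype]
  rfl

theorem IsPrimitiveRoot.geom_sum_zpow_eq_zero {R : Type*} [Field R] {ζ : R} {k : ℕ}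
    (hζ : IsPrimitiveRoot ζ k) {d : ℤ} (hd : ¬ (k : ℤ) ∣ d) :
    ∑ i ∈ Finset.range k, (ζ ^ d) ^ i = 0 := by
  have hne : 1 - ζ ^ d ≠ 0 := sub_ne_zero.mpr fun h => hd ((hζ.zpow_eq_one_iff_dvd d).mp h.symm)
  have hpow : (ζ ^ d) ^ k = 1 := by
    rw [← zpow_natCast, ← _root_.zpow_mul, mul_comm, _root_.zpow_mul, zpow_natCast,
      hζ.pow_eq_one, _root_.one_zpow]
  refine (mul_eq_zero.mp ?_).resolve_left hne
  rw [mul_neg_geom_sum, hpow, sub_self]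

-- `S_m(φ)`, `L(φ)` and `λ̊` of the statement, for coefficients `c` vanishing off `s`.
noncomputable def twistedDFT (m : ℕ) (φ : ℝ) : Matrix (Fin m) (Fin m) ℂ :=
  of fun j k => (1 / Real.sqrt m : ℂ) *
    exp (2 * π * I * (j : ℕ) * (k : ℕ) / m + I * φ * (j : ℕ))

noncomputable def blockSymbol (m : ℕ) (c : ℤ → ℂ) (φ : ℝ) : Matrix (Fin m) (Fin m) ℂ :=
  of fun j k => ∑' ζ : ℤ, c (ζ * m + (k : ℕ) - (j : ℕ)) * exp (I * φ * m * ζ)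

noncomputable def symbol (s : Finset ℤ) (c : ℤ → ℂ) (ψ : ℂ) : ℂ :=
  ∑ p ∈ s, c p * exp (I * ψ * p)

theorem hasSum_symbol {s : Finset ℤ} {c : ℤ → ℂ} (hc : ∀ p ∉ s, c p = 0) (ψ : ℂ) :
    HasSum (fun p => c p * exp (I * ψ * p)) (symbol s c ψ) :=
  hasSum_sum_of_ne_finset_zero fun p hp => by rw [hc p hp, zero_mul]

section

variable (m : ℕ) [NeZero m] (φ : ℝ)

theorem twistedDFT_mul_star (j k l : Fin m) :
    twistedDFT m φ j l * star (twistedDFT m φ k l) =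
      (1 / m) * exp (I * φ * (((j : ℕ) : ℤ) - (k : ℕ) : ℤ)) *
        (exp (2 * π * I / m) ^ (((j : ℕ) : ℤ) - (k : ℕ))) ^ (l : ℕ) := by
  have hm : (m : ℂ) ≠ 0 := Nat.cast_ne_zero.mpr (NeZero.ne m)
  have hsqrt : (1 / Real.sqrt m : ℂ) * (1 / Real.sqrt m : ℂ) = 1 / m := by
    rw [div_mul_div_comm, one_mul, ← ofReal_mul, Real.mul_self_sqrt (Nat.cast_nonneg _),
      ofReal_natCast]
  rw [← exp_int_mul, ← exp_nat_mul]
  simp only [twistedDFT, of_apply, star_mul', star_def, ← Complex.exp_conj, map_div₀, map_one,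
    conj_ofReal]
  rw [mul_mul_mul_comm, hsqrt, ← exp_add]
  conv_rhs => rw [mul_assoc, ← exp_add]
  congr 2
  simp only [map_add, map_mul, map_div₀, conj_I, conj_ofReal, map_natCast, map_ofNat]
  push_cast
  field_simp
  ring

theorem twistedDFT_mul_conjTranspose : twistedDFT m φ * (twistedDFT m φ)ᴴ = 1 := by
  have hζ := isPrimitiveRoot_exp m (NeZero.ne m)
  ext j k
  rw [mul_apply, one_apply]
  simp only [conjTranspose_apply, twistedDFT_mul_star, ← Finset.mul_sum]
  rw [Fin.sum_univ_eq_sum_range (fun l => (exp (2 * π * I / m) ^ (((j : ℕ) : ℤ) - (k : ℕ))) ^ l)]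
  by_cases hjk : j = k
  · subst hjk
    have hm : (m : ℂ) ≠ 0 := Nat.cast_ne_zero.mpr (NeZero.ne m)
    simp [hm]
  · rw [if_neg hjk, hζ.geom_sum_zpow_eq_zero, mul_zero]
    intro hdvd
    have := Int.eq_zero_of_abs_lt_dvd hdvd (abs_sub_lt_iff.mpr ⟨by omega, by omega⟩)
    omega

variable {s : Finset ℤ} {c : ℤ → ℂ}

theorem blockSymbol_mul_twistedDFT (hc : ∀ p ∉ s, c p = 0) :
    blockSymbol m c φ * twistedDFT m φ =
      twistedDFT m φ * diagonal fun l : Fin m => symbol s c (φ + 2 * π * (l : ℕ) / m) := by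
  ext j k
  set ψ : ℂ := φ + 2 * π * (k : ℕ) / m
  set h : ℤ → ℂ := fun p => c p * exp (I * ψ * p)
  have hterm : ∀ (l : Fin m) (ζ : ℤ),
      c (ζ * m + (l : ℕ) - (j : ℕ)) * exp (I * φ * m * ζ) * twistedDFT m φ l k =
        twistedDFT m φ j k * h (ζ * m + (l : ℕ) - (j : ℕ)) := by
    intro l ζ
    have hm : (m : ℂ) ≠ 0 := Nat.cast_ne_zero.mpr (NeZero.ne m)
    have hexp : exp (I * φ * m * ζ) * exp (2 * π * I * (l : ℕ) * (k : ℕ) / m + I * φ * (l : ℕ)) =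
        exp (2 * π * I * (j : ℕ) * (k : ℕ) / m + I * φ * (j : ℕ)) *
          exp (I * ψ * ((ζ * m + (l : ℕ) - (j : ℕ) : ℤ) : ℂ)) := by
      rw [← exp_add, ← exp_add, exp_eq_exp_iff_exists_int]
      exact ⟨-((k : ℕ) * ζ), by simp only [ψ]; push_cast; field_simp; ring⟩
    simp only [twistedDFT, of_apply, h]
    linear_combination (c (ζ * m + (l : ℕ) - (j : ℕ)) * (1 / Real.sqrt m : ℂ)) * hexp
  calc (blockSymbol m c φ * twistedDFT m φ) j k
      = twistedDFT m φ j k * ∑ l : Fin m, ∑' ζ : ℤ, h (ζ * m + (l : ℕ) - (j : ℕ)) := by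
        simp only [mul_apply, blockSymbol, of_apply, ← tsum_mul_right, hterm, tsum_mul_left,
          Finset.mul_sum]
    _ = twistedDFT m φ j k * ∑' q : ℤ, h (q - (j : ℕ)) :=
        congrArg _ (Int.sum_fin_tsum_mul_add
          ((hasSum_symbol hc ψ).summable.comp_injective sub_left_injective) m)
    _ = (twistedDFT m φ * diagonal fun l : Fin m => symbol s c (φ + 2 * π * (l : ℕ) / m)) j k := by
        rw [mul_diagonal, ← (hasSum_symbol hc ψ).tsum_eq]
        exact congrArg _ ((Equiv.subRight _).tsum_eq h)

theorem blockSymbol_eq_twistedDFT_mul_diagonal_mul_inv (hc : ∀ p ∉ s, c p = 0) :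
    blockSymbol m c φ =
      twistedDFT m φ * diagonal (fun l : Fin m => symbol s c (φ + 2 * π * (l : ℕ) / m)) *
        (twistedDFT m φ)⁻¹ := by
  have hF := twistedDFT_mul_conjTranspose m φ
  rw [inv_eq_right_inv hF, ← blockSymbol_mul_twistedDFT m φ hc, Matrix.mul_assoc, hF,
    Matrix.mul_one]

end

/-- The blocked symbol matrix `L(φ)` of a constant-coefficient
finite-difference operator with coefficients `å_k` (supported in `|k| ≤ S`) is
unitarily diagonalized by `S_m(φ)`, with eigenvalues `λ̊(φ + 2πl/m)`. -/
theorem stmt_2 (S m : ℕ) (hm : 1 ≤ m) (a : ℤ → ℝ)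
    (hsupp : ∀ p : ℤ, (S : ℤ) < |p| → a p = 0) (φ : ℝ) :
    (Matrix.of fun j k : Fin m =>
        ∑' ζ : ℤ, ((a (ζ * m + (k : ℕ) - (j : ℕ)) : ℂ) *
          Complex.exp (Complex.I * φ * m * ζ)))
    = (Matrix.of fun j k : Fin m =>
        (1 / Real.sqrt m : ℂ) *
          Complex.exp (2 * π * Complex.I * (j : ℕ) * (k : ℕ) / m + Complex.I * φ * (j : ℕ)))
      * Matrix.diagonal (fun l : Fin m =>
          ∑ k ∈ Finset.Icc (-(S : ℤ)) (S : ℤ),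
            (a k : ℂ) * Complex.exp (Complex.I * (φ + 2 * π * (l : ℕ) / m) * k))
      * (Matrix.of fun j k : Fin m =>
          (1 / Real.sqrt m : ℂ) *
            Complex.exp (2 * π * Complex.I * (j : ℕ) * (k : ℕ) / m + Complex.I * φ * (j : ℕ)))⁻¹ := by
  have : NeZero m := ⟨by omega⟩
  refine blockSymbol_eq_twistedDFT_mul_diagonal_mul_inv m φ
    (s := Finset.Icc (-(S : ℤ)) S) (c := fun p => (a p : ℂ)) fun p hp => ?_
  rw [Finset.mem_Icc, ← abs_le, not_le] at hp
  rw [hsupp p hp, ofReal_zero]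
end

section
/- Let X be a mesh of period m and p = 2s. Define Δ_j[f] = p_{j−1}[f](x_j) − f(x_j), where p_{j−1}[f] is the degree-p cell-average reconstruction polynomial centered at cell j−1. Then Δ_m[x^{p+1}] = Δ_0[x^{p+1}]. Consequently, the truncation error ε_j = (Δ_{j+1}[x^{p+1}] − Δ_j[x^{p+1}])/h_{j+1/2} of the finite-volume scheme on the monomial x^{p+1} satisfies the zero weighted average Σ_{j=0}^{m−1} h_{j+1/2} ε_j = 0. -/
open scoped Real

/-!
Two polynomials of degree `≤ n` with the same integrals over `n + 1` consecutive cells agree: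
their difference has a root in every cell (Rolle's theorem for its primitive), hence `n + 1`
distinct roots. For a mesh with `x (k + m) = x k + c` and a polynomial `f` of degree `≤ n + 1`
this identifies the reconstruction on the stencil shifted by `m` with
`p(· - c) + (f - f(· - c))`, because `f - f(· - c)` has degree `≤ n` and is reproduced exactly.
Evaluating at `x j + c` gives `Δ_{j+m}[f] = Δ_j[f]`, and the weighted sum of the truncation
errors telescopes to `Δ_m - Δ_0 = 0`.
-/

open Polynomial

theorem exists_mem_Ioo_eq_zero_of_intervalIntegral_eq_zero {g : ℝ → ℝ} (hg : Continuous g)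
    {a b : ℝ} (hab : a < b) (h : ∫ t in a..b, g t = 0) : ∃ c ∈ Set.Ioo a b, g c = 0 := by
  have hderiv (u : ℝ) : HasDerivAt (fun v => ∫ t in a..v, g t) (g u) u :=
    (hg.integral_hasStrictDerivAt a u).hasDerivAt
  refine exists_hasDerivAt_eq_zero hab ?_ (by simp [h]) fun u _ => hderiv u
  exact fun u _ => (hderiv u).continuousAt.continuousWithinAt

namespace Polynomial

theorem natDegree_sub_taylor_le {R : Type*} [CommRing R] {f : R[X]} {n : ℕ}
    (hf : f.natDegree ≤ n + 1) (r : R) : (f - taylor r f).natDegree ≤ n := by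
  rcases eq_or_ne f 0 with rfl | hf0
  · simp
  rw [natDegree_le_iff_degree_le]
  refine Order.le_of_lt_succ ((degree_sub_lt_left (degree_taylor f r).symm hf0
    (by rw [leadingCoeff_taylor])).trans_le ?_)
  exact degree_le_of_natDegree_le hf

theorem intervalIntegral_eval_taylor_neg (p : ℝ[X]) (u v c : ℝ) :
    ∫ t in (u + c)..(v + c), (taylor (-c) p).eval t = ∫ t in u..v, p.eval t := by
  simp only [taylor_eval, ← sub_eq_add_neg]
  rw [intervalIntegral.integral_comp_sub_right (fun t => p.eval t)]
  simp

theorem intervalIntegral_eval_sub (p q : ℝ[X]) (u v : ℝ) :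
    ∫ t in u..v, (p - q).eval t = (∫ t in u..v, p.eval t) - ∫ t in u..v, q.eval t := by
  simp only [eval_sub]
  exact intervalIntegral.integral_sub (p.continuous.intervalIntegrable _ _)
    (q.continuous.intervalIntegrable _ _)

theorem intervalIntegral_eval_add (p q : ℝ[X]) (u v : ℝ) :
    ∫ t in u..v, (p + q).eval t = (∫ t in u..v, p.eval t) + ∫ t in u..v, q.eval t := by
  simp only [eval_add]
  exact intervalIntegral.integral_add (p.continuous.intervalIntegrable _ _)
    (q.continuous.intervalIntegrable _ _)

theorem eq_zero_of_intervalIntegral_cells_eq_zero {x : ℤ → ℝ} (hx : StrictMono x) {a : ℤ}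
    {n : ℕ} {R : ℝ[X]} (hR : R.natDegree ≤ n)
    (h : ∀ k ∈ Finset.Icc a (a + n), ∫ t in x k..x (k + 1), R.eval t = 0) : R = 0 := by
  have hroot (i : Fin (n + 1)) : ∃ r ∈ Set.Ioo (x (a + i)) (x (a + i + 1)), R.eval r = 0 :=
    exists_mem_Ioo_eq_zero_of_intervalIntegral_eq_zero R.continuous (hx (lt_add_one _))
      (h _ (Finset.mem_Icc.2 ⟨by omega, by omega⟩))
  choose r hr hr_root using hroot
  have hr_mono : StrictMono r := fun i j hij =>
    calc r i < x (a + i + 1) := (hr i).2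
      _ ≤ x (a + j) := hx.monotone (by simp only [Fin.lt_def] at hij; omega)
      _ < r j := (hr j).1
  exact eq_zero_of_natDegree_lt_card_of_eval_eq_zero R hr_mono.injective hr_root
    (by simpa using Nat.lt_succ_of_le hR)

end Polynomial

/-- The paper's reconstruction `p_j[f]` of degree `p` is the polynomial of degree `≤ p` with
`MatchesCellIntegrals x (j - p / 2) p p_j[f] f`. -/
def MatchesCellIntegrals (x : ℤ → ℝ) (a : ℤ) (n : ℕ) (p : ℝ[X]) (f : ℝ → ℝ) : Prop :=
  ∀ k ∈ Finset.Icc a (a + n), ∫ t in x k..x (k + 1), p.eval t = ∫ t in x k..x (k + 1), f t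

namespace MatchesCellIntegrals

variable {x : ℤ → ℝ} {a : ℤ} {n : ℕ} {p q : ℝ[X]}

theorem unique (hx : StrictMono x) {f : ℝ → ℝ} (hpf : MatchesCellIntegrals x a n p f)
    (hqf : MatchesCellIntegrals x a n q f) (hp : p.natDegree ≤ n) (hq : q.natDegree ≤ n) :
    p = q :=
  sub_eq_zero.1 <| eq_zero_of_intervalIntegral_cells_eq_zero hx
    (max_self n ▸ natDegree_sub_le_of_le hp hq) fun k hk => by
      rw [intervalIntegral_eval_sub, hpf k hk, hqf k hk, sub_self]

theorem taylor_shift {m : ℤ} {c : ℝ} (hshift : ∀ k, x (k + m) = x k + c) {f : ℝ[X]}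
    (hpf : MatchesCellIntegrals x a n p f.eval) :
    MatchesCellIntegrals x (a + m) n (taylor (-c) p + (f - taylor (-c) f)) f.eval := by
  intro k hk
  have hk' : k - m ∈ Finset.Icc a (a + n) := by
    simp only [Finset.mem_Icc] at hk ⊢
    omega
  have hcell (g : ℝ[X]) :
      ∫ t in x k..x (k + 1), (taylor (-c) g).eval t =
        ∫ t in x (k - m)..x (k - m + 1), g.eval t := by
    rw [← intervalIntegral_eval_taylor_neg g, ← hshift (k - m), ← hshift (k - m + 1),
      sub_add_cancel, show k - m + 1 + m = k + 1 by ring]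
  rw [intervalIntegral_eval_add, intervalIntegral_eval_sub, hcell, hcell, hpf _ hk']
  exact add_sub_cancel _ _

end MatchesCellIntegrals

open MatchesCellIntegrals in
theorem reconstruction_sub_eval_add_shift {x : ℤ → ℝ} (hx : StrictMono x) {m : ℤ} {c : ℝ}
    (hshift : ∀ k, x (k + m) = x k + c) {a : ℤ} {n : ℕ} {p q f : ℝ[X]}
    (hp : p.natDegree ≤ n) (hq : q.natDegree ≤ n) (hf : f.natDegree ≤ n + 1)
    (hpf : MatchesCellIntegrals x a n p f.eval) (hqf : MatchesCellIntegrals x (a + m) n q f.eval)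
    (t : ℝ) : q.eval (t + c) - f.eval (t + c) = p.eval t - f.eval t := by
  have hdeg : (taylor (-c) p + (f - taylor (-c) f)).natDegree ≤ n :=
    natDegree_add_le_of_degree_le (natDegree_taylor p _ ▸ hp) (natDegree_sub_taylor_le hf _)
  rw [hqf.unique hx (hpf.taylor_shift hshift) hq hdeg]
  simp only [eval_add, eval_sub, taylor_eval, add_neg_cancel_right]
  ring

theorem stmt_9_general (s m N : ℕ)
    (x : ℤ → ℝ) (hmono : StrictMono x)
    (hperm : ∀ j : ℤ, x (j + m) = x j + m * (2 * π / N))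
    (P : ℤ → Polynomial ℝ)
    (hdeg : ∀ j : ℤ, (P j).degree ≤ (2 * s : ℕ))
    (hP : ∀ j : ℤ, ∀ k ∈ Finset.Icc (-(s : ℤ)) (s : ℤ),
      (∫ t in (x (j + k))..(x (j + k + 1)), (P j).eval t)
        = ∫ t in (x (j + k))..(x (j + k + 1)), t ^ (2 * s + 1)) :
    ((P ((m : ℤ) - 1)).eval (x m) - (x m) ^ (2 * s + 1)
        = (P (-1)).eval (x 0) - (x 0) ^ (2 * s + 1))
    ∧ ∑ j ∈ Finset.range m,
        (x (j + 1) - x j) *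
          ((((P ((j : ℤ) + 1 - 1)).eval (x (j + 1)) - (x (j + 1)) ^ (2 * s + 1))
            - ((P ((j : ℤ) - 1)).eval (x j) - (x j) ^ (2 * s + 1)))
            / (x (j + 1) - x j)) = 0 := by
  set Δ : ℤ → ℝ := fun j => (P (j - 1)).eval (x j) - x j ^ (2 * s + 1)
  have hmatch (j : ℤ) : MatchesCellIntegrals x (j - s) (2 * s) (P j) (X ^ (2 * s + 1)).eval := by
    intro k hk
    have := hP j (k - j) (by simp only [Finset.mem_Icc] at hk ⊢; omega)
    simpa using this
  have hperiod : Δ m = Δ 0 := by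
    have hqf := hmatch (m - 1)
    rw [show (m : ℤ) - 1 - s = -1 - s + m by ring] at hqf
    have := reconstruction_sub_eval_add_shift hmono hperm (natDegree_le_iff_degree_le.2 (hdeg _))
      (natDegree_le_iff_degree_le.2 (hdeg _)) (by simp) (hmatch (-1)) hqf (x 0)
    simpa [Δ, ← hperm 0] using this
  refine ⟨hperiod, ?_⟩
  have hwidth (j : ℕ) : x (j + 1) - x j ≠ 0 := sub_ne_zero.2 (hmono (lt_add_one _)).ne'
  simp only [mul_div_cancel₀ _ (hwidth _)]
  have := Finset.sum_range_sub (fun j : ℕ => Δ j) m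
  push_cast at this
  rw [this, hperiod, sub_self]

/-- With `P j` the degree-`≤ 2s` reconstruction polynomial of
`f(x) = x^{2s+1}` on cells `j−s, …, j+s` of a mesh of period `m`, and
`Δ j = P_{j−1}(x_j) − x_j^{2s+1}`, one has `Δ_m = Δ_0`, and the weighted average of the
truncation error `ε_j = (Δ_{j+1} − Δ_j)/h_{j+1/2}` over one period vanishes:
`Σ_{j<m} h_{j+1/2} ε_j = 0`. -/
theorem stmt_9 (s m N : ℕ) (hN : 0 < N) (hm : 0 < m)
    (x : ℤ → ℝ) (hmono : StrictMono x)
    (hperN : ∀ j : ℤ, x (j + N) = x j + 2 * π)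
    (hperm : ∀ j : ℤ, x (j + m) = x j + m * (2 * π / N))
    (P : ℤ → Polynomial ℝ)
    (hdeg : ∀ j : ℤ, (P j).degree ≤ (2 * s : ℕ))
    (hP : ∀ j : ℤ, ∀ k ∈ Finset.Icc (-(s : ℤ)) (s : ℤ),
      (∫ t in (x (j + k))..(x (j + k + 1)), (P j).eval t)
        = ∫ t in (x (j + k))..(x (j + k + 1)), t ^ (2 * s + 1)) :
    ((P ((m : ℤ) - 1)).eval (x m) - (x m) ^ (2 * s + 1)
        = (P (-1)).eval (x 0) - (x 0) ^ (2 * s + 1))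
    ∧ ∑ j ∈ Finset.range m,
        (x (j + 1) - x j) *
          ((((P ((j : ℤ) + 1 - 1)).eval (x (j + 1)) - (x (j + 1)) ^ (2 * s + 1))
            - ((P ((j : ℤ) - 1)).eval (x j) - (x j) ^ (2 * s + 1)))
            / (x (j + 1) - x j)) = 0 :=
  stmt_9_general s m N x hmono hperm P hdeg hP
end

section
/- Consider the scheme R3 on a mesh with alternating steps of structure γ = (ξ, −ξ), ξ ∈ [0,1): with H = (1+ξ)/(1−ξ), the 2×2 symbol matrix L(γ,φ) = L_{−1} e^{−2iφ} + L_0 + L_1 e^{2iφ}, where 6L_{−1} = [[H^{−1}, −4−H−H^{−1}],[0, H]], 6L_0 = [[2+H, 2],[−4−H−H^{−1}, 2+H^{−1}]], 6L_1 = [[0,0],[2,0]], has an eigenvalue λ_0(γ,φ) with Taylor expansion λ_0(γ,φ) = iφ + (1/3) i ξ² φ³ + (1/12)(1−ξ²)(1−4ξ²) φ⁴ + O(φ⁵) as φ → 0. In particular, for ξ > 1/2 there holds Re λ_0(γ,φ) < 0 for all sufficiently small φ ≠ 0. -/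
open Matrix Complex Filter Asymptotics
open scoped Real Topology

noncomputable def S10P (w : ℂ) : ℂ := 1 + w + w^2/2 + w^3/6 + w^4/24

lemma S10P_eq (w : ℂ) : S10P w = ∑ m ∈ Finset.range 5, w ^ m / m.factorial := by
  simp [S10P, Finset.sum_range_succ, Nat.factorial]

/-- Taylor remainder of `exp (c φ)` at order 5 is `O(|φ|^5)`. -/
lemma S10_exp_rem (c : ℂ) :
    (fun φ : ℝ => Complex.exp (c * φ) - S10P (c * φ)) =O[𝓝 (0:ℝ)] fun φ => |φ| ^ 5 := by
  rw [isBigO_iff]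
  refine ⟨‖c‖ ^ 5, ?_⟩
  have hδ : (0:ℝ) < 1 / (‖c‖ + 1) := by positivity
  filter_upwards [Metric.eventually_nhds_iff.mpr ⟨_, hδ, fun {y} hy => hy⟩] with φ hφ
  simp only [Real.dist_eq, sub_zero] at hφ
  have habs : ‖c * ↑φ‖ = ‖c‖ * |φ| := by
    rw [norm_mul, Complex.norm_real, Real.norm_eq_abs]
  have hc1 : (0:ℝ) < ‖c‖ + 1 := by positivity
  have hcn : (0:ℝ) ≤ ‖c‖ := norm_nonneg c
  have hx : ‖c * ↑φ‖ ≤ 1 := by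
    rw [habs]
    have h1 : ‖c‖ * |φ| ≤ ‖c‖ * (1 / (‖c‖ + 1)) :=
      mul_le_mul_of_nonneg_left hφ.le hcn
    have h2 : ‖c‖ * (1 / (‖c‖ + 1)) ≤ 1 := by
      rw [mul_one_div, div_le_one hc1]; linarith
    linarith
  have hb := Complex.exp_bound hx (n := 5) (by norm_num)
  rw [← S10P_eq] at hb
  have h5 : (0:ℝ) ≤ ‖c * ↑φ‖ ^ 5 := by positivity
  have h2 : ‖c * ↑φ‖ ^ 5 * (((Nat.succ 5 : ℕ) : ℝ) * (((Nat.factorial 5 : ℕ) : ℝ) * ((5:ℕ):ℝ))⁻¹)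
      ≤ ‖c‖ ^ 5 * |φ| ^ 5 := by
    calc ‖c * ↑φ‖ ^ 5 * (((Nat.succ 5 : ℕ) : ℝ) * (((Nat.factorial 5 : ℕ) : ℝ) * ((5:ℕ):ℝ))⁻¹)
        ≤ ‖c * ↑φ‖ ^ 5 * 1 := by
          apply mul_le_mul_of_nonneg_left _ h5
          norm_num [Nat.factorial]
      _ = ‖c‖ ^ 5 * |φ| ^ 5 := by rw [mul_one, habs, mul_pow]
  have h3 : ‖|φ| ^ 5‖ = |φ| ^ 5 := abs_of_nonneg (by positivity)
  rw [h3]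
  calc ‖Complex.exp (c * φ) - S10P (c * φ)‖ ≤ _ := hb
    _ ≤ ‖c‖ ^ 5 * |φ| ^ 5 := by exact_mod_cast h2

noncomputable def S10t (S : ℂ) (φ : ℝ) : ℂ :=
  (Complex.exp (-2 * Complex.I * φ) * S + 4 + S) / 6

noncomputable def S10d (S : ℂ) (φ : ℝ) : ℂ :=
  (Complex.exp (-2 * Complex.I * φ) ^ 2 - Complex.exp (-2 * Complex.I * φ) * (6 * S + 18)
    + (21 + 6 * S) - 4 * Complex.exp (2 * Complex.I * φ)) / 36

noncomputable def S10disc (S : ℂ) (φ : ℝ) : ℂ := (S10t S φ) ^ 2 - 4 * S10d S φ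

noncomputable def S10lam (S : ℂ) (φ : ℝ) : ℂ :=
  (S10t S φ - Complex.exp (Complex.log (S10disc S φ) / 2)) / 2

lemma S10_exp_analytic (c : ℂ) (x : ℝ) :
    AnalyticAt ℝ (fun φ : ℝ => Complex.exp (c * φ)) x := by
  have h1 : AnalyticAt ℝ (fun φ : ℝ => c * (φ : ℂ)) x :=
    analyticAt_const.mul (Complex.ofRealCLM.analyticAt x)
  exact (analyticAt_cexp.restrictScalars.comp h1 : _)

lemma S10t_analytic (S : ℂ) (x : ℝ) : AnalyticAt ℝ (S10t S) x := by
  unfold S10t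
  exact (((S10_exp_analytic _ x).mul analyticAt_const).add analyticAt_const |>.add
    analyticAt_const).div analyticAt_const (by norm_num)

lemma S10d_analytic (S : ℂ) (x : ℝ) : AnalyticAt ℝ (S10d S) x := by
  unfold S10d
  exact ((((S10_exp_analytic _ x).pow 2).sub ((S10_exp_analytic _ x).mul analyticAt_const)
    |>.add analyticAt_const |>.sub (analyticAt_const.mul (S10_exp_analytic _ x))).div
    analyticAt_const (by norm_num))

lemma S10disc_analytic (S : ℂ) (x : ℝ) : AnalyticAt ℝ (S10disc S) x :=
  ((S10t_analytic S x).pow 2).sub (analyticAt_const.mul (S10d_analytic S x))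

lemma S10exp0 : Complex.exp (-2 * Complex.I * ((0:ℝ):ℂ)) = 1 := by
  norm_num

lemma S10exp0' : Complex.exp (2 * Complex.I * ((0:ℝ):ℂ)) = 1 := by
  norm_num

lemma S10t0 (S : ℂ) : S10t S 0 = (2 * S + 4) / 6 := by
  rw [S10t, S10exp0]; ring

lemma S10d0 (S : ℂ) : S10d S 0 = 0 := by
  rw [S10d, S10exp0, S10exp0']; ring

lemma S10disc0 (S : ℂ) : S10disc S 0 = ((2 * S + 4) / 6) ^ 2 := by
  rw [S10disc, S10t0, S10d0]; ring

lemma S10lam_analytic (Sr : ℝ) (hSr : 0 < Sr) : AnalyticAt ℝ (S10lam (Sr:ℂ)) 0 := by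
  have hd0 : S10disc (Sr:ℂ) 0 = (((2 * Sr + 4) / 6 : ℝ) : ℂ) ^ 2 := by
    rw [S10disc0]; push_cast; ring
  have hslit : S10disc (Sr:ℂ) 0 ∈ Complex.slitPlane := by
    rw [hd0, ← Complex.ofReal_pow]
    rw [Complex.mem_slitPlane_iff]
    left
    simp only [Complex.ofReal_re]
    positivity
  have hlog : AnalyticAt ℝ (fun φ : ℝ => Complex.log (S10disc (Sr:ℂ) φ)) 0 :=
    ((analyticAt_clog hslit).restrictScalars.comp (S10disc_analytic _ 0) : _)
  have hsqrt : AnalyticAt ℝ (fun φ : ℝ => Complex.exp (Complex.log (S10disc (Sr:ℂ) φ) / 2)) 0 :=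
    (analyticAt_cexp.restrictScalars.comp (hlog.div analyticAt_const (by norm_num)) : _)
  exact ((S10t_analytic _ 0).sub hsqrt).div analyticAt_const (by norm_num)

lemma S10lam0 (Sr : ℝ) (hSr : 0 < Sr) : S10lam (Sr:ℂ) 0 = 0 := by
  have hr : (0:ℝ) < (2 * Sr + 4) / 6 := by linarith
  have hd0 : S10disc (Sr:ℂ) 0 = (((2 * Sr + 4) / 6 : ℝ) : ℂ) ^ 2 := by
    rw [S10disc0]; push_cast; ring
  have hlog : Complex.log (S10disc (Sr:ℂ) 0) = ((Real.log (((2 * Sr + 4) / 6) ^ 2) : ℝ) : ℂ) := by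
    rw [hd0, ← Complex.ofReal_pow, Complex.ofReal_log (by positivity)]
  have hlog2 : Real.log (((2 * Sr + 4) / 6) ^ 2) = 2 * Real.log ((2 * Sr + 4) / 6) := by
    rw [Real.log_pow]; push_cast; ring
  rw [S10lam, hlog, hlog2]
  have : ((2 * Real.log ((2 * Sr + 4) / 6) : ℝ) : ℂ) / 2 = ((Real.log ((2 * Sr + 4) / 6) : ℝ) : ℂ) := by
    push_cast; ring
  rw [this, ← Complex.ofReal_exp, Real.exp_log hr, S10t0]
  push_cast; ring

lemma S10_quad (Sr : ℝ) (hSr : 0 < Sr) :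
    ∀ᶠ φ : ℝ in 𝓝 0, (S10lam (Sr:ℂ) φ) ^ 2 - S10t (Sr:ℂ) φ * S10lam (Sr:ℂ) φ + S10d (Sr:ℂ) φ = 0 := by
  have hne : S10disc (Sr:ℂ) 0 ≠ 0 := by
    rw [S10disc0]
    have : (2 * (Sr:ℂ) + 4) / 6 ≠ 0 := by
      intro h
      have := congrArg Complex.re h
      simp [Complex.div_re] at this
      norm_num at this
      linarith
    exact pow_ne_zero 2 this
  filter_upwards [(S10disc_analytic (Sr:ℂ) 0).continuousAt.eventually_ne hne] with φ hφ
  have hs2 : (Complex.exp (Complex.log (S10disc (Sr:ℂ) φ) / 2)) ^ 2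
      = (S10t (Sr:ℂ) φ) ^ 2 - 4 * S10d (Sr:ℂ) φ := by
    rw [← S10disc]
    rw [sq, ← Complex.exp_add]
    have : Complex.log (S10disc (Sr:ℂ) φ) / 2 + Complex.log (S10disc (Sr:ℂ) φ) / 2
        = Complex.log (S10disc (Sr:ℂ) φ) := by ring
    rw [this, Complex.exp_log hφ]
  rw [S10lam]
  linear_combination hs2 / 4

noncomputable def S10q (x w : ℂ) : ℂ :=
  (-8 - 36*x^2 + 60*x^4 - 16*x^6)
  + w*(22/9 - 16/9*x^2 + 2/3*x^4 - 12*x^6)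
  + w^2*(-4/9 - 26/9*x^2 + 40/3*x^4 - 38/3*x^6 + 8*x^8)
  + w^3*(1/36 - 19/36*x^2 + 137/12*x^4 - 251/12*x^6 + 14*x^8 - 4*x^10)

noncomputable def S10muw (x w : ℂ) : ℂ := w - x^2*w^3/3 + (1/12)*(1-x^2)*(1-4*x^2)*w^4

set_option maxHeartbeats 1000000 in
lemma S10_G_eq_mul (x w s : ℂ) (hs : s * (1 - x^2) = 2 * (1 + x^2)) :
    (1 - x^2) * (36 * S10muw x w ^ 2
      - 6 * S10muw x w * (S10P (-2*w) * s + 4 + s)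
      + S10P (-2*w) ^ 2 - (6*s+18) * S10P (-2*w)
      + (21 + 6*s) - 4 * S10P (2*w))
    = w^5 * S10q x w := by
  simp only [S10P, S10muw, S10q]
  linear_combination (-6 * (w - x^2*w^3/3 + (1/12)*(1-x^2)*(1-4*x^2)*w^4)
      * ((1 + (-2*w) + (-2*w)^2/2 + (-2*w)^3/6 + (-2*w)^4/24) + 1)
    - 6 * (1 + (-2*w) + (-2*w)^2/2 + (-2*w)^3/6 + (-2*w)^4/24) + 6) * hs

lemma S10_G_eq (x w s : ℂ) (hs : s * (1 - x^2) = 2 * (1 + x^2)) (hx : (1:ℂ) - x^2 ≠ 0) :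
    36 * S10muw x w ^ 2
      - 6 * S10muw x w * (S10P (-2*w) * s + 4 + s)
      + S10P (-2*w) ^ 2 - (6*s+18) * S10P (-2*w)
      + (21 + 6*s) - 4 * S10P (2*w)
    = w^5 * S10q x w / (1 - x^2) := by
  rw [eq_div_iff hx]
  linear_combination S10_G_eq_mul x w s hs

noncomputable def S10mus (x : ℝ) (φ : ℝ) : ℂ :=
  Complex.I * φ + (1 / 3 : ℂ) * Complex.I * (x : ℂ) ^ 2 * (φ : ℂ) ^ 3
    + (1 / 12 : ℂ) * (1 - (x : ℂ) ^ 2) * (1 - 4 * (x : ℂ) ^ 2) * (φ : ℂ) ^ 4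

lemma S10mus_eq (x : ℝ) (φ : ℝ) : S10mus x φ = S10muw (x : ℂ) (Complex.I * φ) := by
  simp only [S10mus, S10muw]
  linear_combination ((1/3)*(x:ℂ)^2*(φ:ℂ)^3*Complex.I
    + (1/12)*(1-(x:ℂ)^2)*(1-4*(x:ℂ)^2)*(φ:ℂ)^4*(1-Complex.I^2)) * Complex.I_sq

lemma S10_g_decomp (x : ℝ) (S E₁ E₂ : ℂ) (φ : ℝ) :
    36 * ((S10mus x φ) ^ 2 - ((E₂ * S + 4 + S) / 6) * S10mus x φ
        + (E₂ ^ 2 - E₂ * (6*S+18) + (21 + 6*S) - 4*E₁) / 36)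
    = (36 * S10mus x φ ^ 2
        - 6 * S10mus x φ * (S10P (-2*(Complex.I * φ)) * S + 4 + S)
        + S10P (-2*(Complex.I * φ)) ^ 2 - (6*S+18) * S10P (-2*(Complex.I * φ))
        + (21 + 6*S) - 4 * S10P (2*(Complex.I * φ)))
      + (E₂ - S10P (-2*(Complex.I * φ)))
          * (-6 * S10mus x φ * S - (6*S+18) + (S10P (-2*(Complex.I * φ)) + E₂))
      - 4 * (E₁ - S10P (2*(Complex.I * φ))) := by
  ring

/-- For the scheme R3 on a period-2 mesh with structure `(ξ, −ξ)`,
`ξ ∈ [0,1)`, the 2×2 symbol matrix `L(γ,φ) = L₋₁e^{−2iφ} + L₀ + L₁e^{2iφ}` has an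
analytic eigenvalue branch `λ₀` with `λ₀(0) = 0` and
`λ₀(φ) = iφ + (1/3)iξ²φ³ + (1/12)(1−ξ²)(1−4ξ²)φ⁴ + O(φ⁵)`; in particular for `ξ > 1/2`,
`Re λ₀(φ) < 0` for all sufficiently small `φ ≠ 0`. -/
theorem stmt_10 (ξ : ℝ) (hξ : ξ ∈ Set.Ico (0 : ℝ) 1) :
    ∃ lam : ℝ → ℂ, AnalyticAt ℝ lam 0 ∧ lam 0 = 0 ∧
      (∀ᶠ φ : ℝ in 𝓝 0, lam φ ∈ spectrum ℂ
        (Complex.exp (-2 * Complex.I * φ) •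
            ((1 / 6 : ℂ) • !![(((1 + ξ) / (1 - ξ) : ℝ) : ℂ)⁻¹,
              -4 - (((1 + ξ) / (1 - ξ) : ℝ) : ℂ) - (((1 + ξ) / (1 - ξ) : ℝ) : ℂ)⁻¹;
              0, (((1 + ξ) / (1 - ξ) : ℝ) : ℂ)])
          + (1 / 6 : ℂ) • !![2 + (((1 + ξ) / (1 - ξ) : ℝ) : ℂ), 2;
              -4 - (((1 + ξ) / (1 - ξ) : ℝ) : ℂ) - (((1 + ξ) / (1 - ξ) : ℝ) : ℂ)⁻¹,
              2 + (((1 + ξ) / (1 - ξ) : ℝ) : ℂ)⁻¹]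
          + Complex.exp (2 * Complex.I * φ) • ((1 / 6 : ℂ) • !![0, 0; 2, 0]))) ∧
      ((fun φ : ℝ => lam φ -
          (Complex.I * φ + (1 / 3 : ℂ) * Complex.I * (ξ : ℂ) ^ 2 * (φ : ℂ) ^ 3
            + (1 / 12 : ℂ) * (1 - (ξ : ℂ) ^ 2) * (1 - 4 * (ξ : ℂ) ^ 2) * (φ : ℂ) ^ 4))
        =O[𝓝 (0 : ℝ)] fun φ => |φ| ^ 5) ∧
      (1 / 2 < ξ → ∀ᶠ φ : ℝ in 𝓝[≠] 0, (lam φ).re < 0) := by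
  obtain ⟨hξ0, hξ1⟩ := hξ
  have h1m : (0:ℝ) < 1 - ξ := by linarith
  have h1p : (0:ℝ) < 1 + ξ := by linarith
  have hx2 : (0:ℝ) < 1 - ξ^2 := by nlinarith
  set H : ℝ := (1 + ξ) / (1 - ξ) with hHdef
  have hHpos : 0 < H := div_pos h1p h1m
  set Sr : ℝ := 2 * (1 + ξ^2) / (1 - ξ^2) with hSrdef
  have hSrpos : 0 < Sr := div_pos (by positivity) hx2
  have hHS : H + H⁻¹ = Sr := by
    rw [hHdef, hSrdef, inv_div]
    field_simp
    ring
  have hSc : ((H:ℝ):ℂ) + (((H:ℝ):ℂ))⁻¹ = ((Sr:ℝ):ℂ) := by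
    rw [← Complex.ofReal_inv, ← Complex.ofReal_add, hHS]
  have hH1 : ((H:ℝ):ℂ) * (((H:ℝ):ℂ))⁻¹ = 1 :=
    mul_inv_cancel₀ (Complex.ofReal_ne_zero.mpr (ne_of_gt hHpos))
  have hxc2 : (1:ℂ) - (ξ:ℂ)^2 ≠ 0 := by
    have h : ((1 - ξ^2 : ℝ) : ℂ) = 1 - (ξ:ℂ)^2 := by push_cast; ring
    rw [← h]
    exact Complex.ofReal_ne_zero.mpr (ne_of_gt hx2)
  have hbigO : (fun φ : ℝ => S10lam ((Sr:ℝ):ℂ) φ - S10mus ξ φ) =O[𝓝 (0:ℝ)]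
      (fun φ => |φ|^5) := by
    have hSsc : ((Sr:ℝ):ℂ) * (1 - (ξ:ℂ)^2) = 2 * (1 + (ξ:ℂ)^2) := by
      rw [hSrdef]
      push_cast
      field_simp
    have hid : ∀ φ : ℝ, 36*((S10mus ξ φ)^2 - S10t ((Sr:ℝ):ℂ) φ * S10mus ξ φ + S10d ((Sr:ℝ):ℂ) φ)
        = (Complex.I*(φ:ℂ))^5 * (S10q (ξ:ℂ) (Complex.I*(φ:ℂ)) / (1-(ξ:ℂ)^2))
          + (Complex.exp (-2*Complex.I*(φ:ℂ)) - S10P (-2*Complex.I*(φ:ℂ)))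
              * (-6*S10mus ξ φ*((Sr:ℝ):ℂ) - (6*((Sr:ℝ):ℂ)+18)
                 + (S10P (-2*Complex.I*(φ:ℂ)) + Complex.exp (-2*Complex.I*(φ:ℂ))))
          - 4 * (Complex.exp (2*Complex.I*(φ:ℂ)) - S10P (2*Complex.I*(φ:ℂ))) := by
      intro φ
      have h1 := S10_G_eq (ξ:ℂ) (Complex.I*(φ:ℂ)) ((Sr:ℝ):ℂ) hSsc hxc2
      rw [← S10mus_eq] at h1
      rw [show ((-2:ℂ))*(Complex.I*(φ:ℂ)) = -2*Complex.I*(φ:ℂ) by ring,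
          show ((2:ℂ))*(Complex.I*(φ:ℂ)) = 2*Complex.I*(φ:ℂ) by ring] at h1
      rw [S10t, S10d]
      linear_combination h1
    have hw5 : (fun φ : ℝ => (Complex.I*(φ:ℂ))^5) =O[𝓝 (0:ℝ)] fun φ => |φ|^5 := by
      apply Asymptotics.isBigO_of_le
      intro φ
      rw [norm_pow, norm_mul, Complex.norm_I, one_mul, Complex.norm_real]
      simp only [Real.norm_eq_abs]
      exact le_abs_self _
    have hqc : Continuous fun φ : ℝ => S10q (ξ:ℂ) (Complex.I*(φ:ℂ)) / (1-(ξ:ℂ)^2) := by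
      unfold S10q
      fun_prop
    have hterm1 : (fun φ : ℝ => (Complex.I*(φ:ℂ))^5 * (S10q (ξ:ℂ) (Complex.I*(φ:ℂ)) / (1-(ξ:ℂ)^2)))
        =O[𝓝 (0:ℝ)] fun φ => |φ|^5 := by
      have := hw5.mul ((hqc.tendsto 0).isBigO_one ℝ)
      simpa using this
    have hcc : Continuous fun φ : ℝ => (-6*S10mus ξ φ*((Sr:ℝ):ℂ) - (6*((Sr:ℝ):ℂ)+18)
        + (S10P (-2*Complex.I*(φ:ℂ)) + Complex.exp (-2*Complex.I*(φ:ℂ)))) := by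
      unfold S10mus S10P
      fun_prop
    have hterm2 : (fun φ : ℝ => (Complex.exp (-2*Complex.I*(φ:ℂ)) - S10P (-2*Complex.I*(φ:ℂ)))
        * (-6*S10mus ξ φ*((Sr:ℝ):ℂ) - (6*((Sr:ℝ):ℂ)+18)
           + (S10P (-2*Complex.I*(φ:ℂ)) + Complex.exp (-2*Complex.I*(φ:ℂ)))))
        =O[𝓝 (0:ℝ)] fun φ => |φ|^5 := by
      have := (S10_exp_rem (-2*Complex.I)).mul ((hcc.tendsto 0).isBigO_one ℝ)
      simpa using this
    have hterm3 : (fun φ : ℝ => (4:ℂ) * (Complex.exp (2*Complex.I*(φ:ℂ)) - S10P (2*Complex.I*(φ:ℂ))))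
        =O[𝓝 (0:ℝ)] fun φ => |φ|^5 := by
      simpa using (S10_exp_rem (2*Complex.I)).const_mul_left (4:ℂ)
    have hgO : (fun φ : ℝ => 36*((S10mus ξ φ)^2 - S10t ((Sr:ℝ):ℂ) φ * S10mus ξ φ + S10d ((Sr:ℝ):ℂ) φ))
        =O[𝓝 (0:ℝ)] fun φ => |φ|^5 := by
      have hfe : (fun φ : ℝ => 36*((S10mus ξ φ)^2 - S10t ((Sr:ℝ):ℂ) φ * S10mus ξ φ + S10d ((Sr:ℝ):ℂ) φ))
          = fun φ : ℝ => ((Complex.I*(φ:ℂ))^5 * (S10q (ξ:ℂ) (Complex.I*(φ:ℂ)) / (1-(ξ:ℂ)^2))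
            + (Complex.exp (-2*Complex.I*(φ:ℂ)) - S10P (-2*Complex.I*(φ:ℂ)))
                * (-6*S10mus ξ φ*((Sr:ℝ):ℂ) - (6*((Sr:ℝ):ℂ)+18)
                   + (S10P (-2*Complex.I*(φ:ℂ)) + Complex.exp (-2*Complex.I*(φ:ℂ)))))
            - 4 * (Complex.exp (2*Complex.I*(φ:ℂ)) - S10P (2*Complex.I*(φ:ℂ))) := by
        funext φ
        rw [hid φ]
      rw [hfe]
      exact (hterm1.add hterm2).sub hterm3
    -- pass from g to lam - mu via the quadratic
    have hμ0 : S10mus ξ 0 = 0 := by simp [S10mus]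
    have hT0ne : S10t ((Sr:ℝ):ℂ) 0 ≠ 0 := by
      rw [S10t0]
      rw [show ((2*((Sr:ℝ):ℂ)+4)/6 : ℂ) = (((2*Sr+4)/6 : ℝ):ℂ) by push_cast; ring]
      exact Complex.ofReal_ne_zero.mpr (by positivity)
    have hmusc : Continuous (S10mus ξ) := by
      unfold S10mus
      fun_prop
    have hden : Filter.Tendsto (fun φ : ℝ => S10mus ξ φ + S10lam ((Sr:ℝ):ℂ) φ - S10t ((Sr:ℝ):ℂ) φ)
        (𝓝 0) (𝓝 (-S10t ((Sr:ℝ):ℂ) 0)) := by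
      have h2 := ((hmusc.continuousAt.add (S10lam_analytic Sr hSrpos).continuousAt).sub
        (S10t_analytic ((Sr:ℝ):ℂ) 0).continuousAt)
      have h3 : (fun φ : ℝ => S10mus ξ φ + S10lam ((Sr:ℝ):ℂ) φ - S10t ((Sr:ℝ):ℂ) φ) 0
          = -S10t ((Sr:ℝ):ℂ) 0 := by
        simp only [hμ0, S10lam0 Sr hSrpos]
        ring
      exact h3 ▸ h2.tendsto
    have hεpos : 0 < ‖S10t ((Sr:ℝ):ℂ) 0‖ := norm_pos_iff.mpr hT0ne
    have hlow : ∀ᶠ φ : ℝ in 𝓝 0, ‖S10t ((Sr:ℝ):ℂ) 0‖/2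
        ≤ ‖S10mus ξ φ + S10lam ((Sr:ℝ):ℂ) φ - S10t ((Sr:ℝ):ℂ) φ‖ := by
      filter_upwards [Metric.tendsto_nhds.mp hden (‖S10t ((Sr:ℝ):ℂ) 0‖/2) (by positivity)] with φ hφ
      rw [dist_eq_norm] at hφ
      have h4 := abs_norm_sub_norm_le (S10mus ξ φ + S10lam ((Sr:ℝ):ℂ) φ - S10t ((Sr:ℝ):ℂ) φ)
        (-S10t ((Sr:ℝ):ℂ) 0)
      rw [norm_neg] at h4
      have h5 := neg_abs_le (‖S10mus ξ φ + S10lam ((Sr:ℝ):ℂ) φ - S10t ((Sr:ℝ):ℂ) φ‖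
        - ‖S10t ((Sr:ℝ):ℂ) 0‖)
      linarith
    have hOg : (fun φ : ℝ => S10lam ((Sr:ℝ):ℂ) φ - S10mus ξ φ) =O[𝓝 (0:ℝ)]
        (fun φ : ℝ => 36*((S10mus ξ φ)^2 - S10t ((Sr:ℝ):ℂ) φ * S10mus ξ φ + S10d ((Sr:ℝ):ℂ) φ)) := by
      rw [Asymptotics.isBigO_iff]
      refine ⟨1/(18*‖S10t ((Sr:ℝ):ℂ) 0‖), ?_⟩
      filter_upwards [S10_quad Sr hSrpos, hlow] with φ hq hl
      have hgeq : 36*((S10mus ξ φ)^2 - S10t ((Sr:ℝ):ℂ) φ * S10mus ξ φ + S10d ((Sr:ℝ):ℂ) φ)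
          = 36 * ((S10mus ξ φ - S10lam ((Sr:ℝ):ℂ) φ)
              * (S10mus ξ φ + S10lam ((Sr:ℝ):ℂ) φ - S10t ((Sr:ℝ):ℂ) φ)) := by
        linear_combination 36*hq
      rw [hgeq, norm_mul, norm_mul, norm_sub_rev (S10mus ξ φ)]
      have h36 : ‖(36:ℂ)‖ = 36 := by
        rw [show ((36:ℂ)) = ((36:ℝ):ℂ) by norm_num, Complex.norm_real, Real.norm_eq_abs]
        norm_num
      rw [h36]
      have hnn := norm_nonneg (S10lam ((Sr:ℝ):ℂ) φ - S10mus ξ φ)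
      have hnn2 := norm_nonneg (S10mus ξ φ + S10lam ((Sr:ℝ):ℂ) φ - S10t ((Sr:ℝ):ℂ) φ)
      rw [div_mul_eq_mul_div, le_div_iff₀ (by positivity)]
      nlinarith
    exact hOg.trans hgO
  refine ⟨S10lam (Sr:ℂ), S10lam_analytic Sr hSrpos, S10lam0 Sr hSrpos, ?_, ?_, ?_⟩
  · -- spectrum membership
    filter_upwards [S10_quad Sr hSrpos] with φ hq
    rw [spectrum.mem_iff]
    intro hu
    rw [Matrix.isUnit_iff_isUnit_det] at hu
    have hE : Complex.exp (-2*Complex.I*(φ:ℂ)) * Complex.exp (2*Complex.I*(φ:ℂ)) = 1 := by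
      rw [← Complex.exp_add, show (-2*Complex.I*(φ:ℂ)) + (2*Complex.I*φ) = 0 by ring,
        Complex.exp_zero]
    have hdet : ((algebraMap ℂ (Matrix (Fin 2) (Fin 2) ℂ) (S10lam (Sr:ℂ) φ)) -
        (Complex.exp (-2 * Complex.I * φ) •
            ((1 / 6 : ℂ) • !![(((H:ℝ)) : ℂ)⁻¹,
              -4 - (((H:ℝ)) : ℂ) - (((H:ℝ)) : ℂ)⁻¹;
              0, (((H:ℝ)) : ℂ)])
          + (1 / 6 : ℂ) • !![2 + (((H:ℝ)) : ℂ), 2;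
              -4 - (((H:ℝ)) : ℂ) - (((H:ℝ)) : ℂ)⁻¹,
              2 + (((H:ℝ)) : ℂ)⁻¹]
          + Complex.exp (2 * Complex.I * φ) • ((1 / 6 : ℂ) • !![0, 0; 2, 0]))).det = 0 := by
      rw [Matrix.det_fin_two]
      simp only [Matrix.sub_apply, Matrix.add_apply, Matrix.smul_apply,
        Matrix.algebraMap_matrix_apply, Matrix.cons_val', Matrix.cons_val_zero,
        Matrix.cons_val_one, Matrix.head_cons, Matrix.head_fin_const, Matrix.empty_val',
        Matrix.cons_val_fin_one, smul_eq_mul, if_true, if_false, Fin.zero_eq_one_iff,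
        Fin.one_eq_zero_iff, Nat.succ_ne_self, ite_true, ite_false]
      norm_num
      rw [S10t, S10d] at hq
      simp only [neg_mul] at hq hE ⊢
      linear_combination hq + ((8 + 2*((Sr:ℝ):ℂ))/36) * hE
        + ((Complex.exp (-(2*Complex.I*(φ:ℂ))))^2/36) * hH1
        + (-(S10lam (Sr:ℂ) φ) * (Complex.exp (-(2*Complex.I*(φ:ℂ))) + 1)/6
            + (-6*Complex.exp (-(2*Complex.I*(φ:ℂ))) + 6
               + 2*Complex.exp (-(2*Complex.I*(φ:ℂ)))*Complex.exp (2*Complex.I*(φ:ℂ)))/36) * hSc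
        + (1/36 - Complex.exp (-(2*Complex.I*(φ:ℂ)))/18) * hH1 - (1/18) * hSc
    rw [hdet] at hu
    simp at hu
  · exact hbigO
  · intro hhalf
    rw [Asymptotics.isBigO_iff] at hbigO
    obtain ⟨C, hC⟩ := hbigO
    have h4ξ : (0:ℝ) < 4*ξ^2 - 1 := by nlinarith
    have hc0 : (0:ℝ) < (1 - ξ^2) * (4*ξ^2 - 1) / 12 := by
      have := mul_pos hx2 h4ξ
      linarith
    set c0 : ℝ := (1 - ξ^2) * (4*ξ^2 - 1) / 12 with hc0def
    have hre : ∀ φ : ℝ, (S10mus ξ φ).re = -c0 * φ^4 := by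
      intro φ
      have h9 : S10mus ξ φ = ((-c0 * φ^4 : ℝ) : ℂ) + ((φ + ξ^2*φ^3/3 : ℝ):ℂ) * Complex.I := by
        rw [S10mus, hc0def]
        push_cast
        ring
      rw [h9]
      simp only [Complex.add_re, Complex.mul_re, Complex.I_re, Complex.I_im,
        Complex.ofReal_re, Complex.ofReal_im]
      ring
    have hδpos : 0 < c0 / (|C| + 1) := by positivity
    have hev1 : ∀ᶠ φ : ℝ in 𝓝[≠] (0:ℝ), ‖S10lam ((Sr:ℝ):ℂ) φ - S10mus ξ φ‖ ≤ C * ‖|φ|^5‖ :=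
      hC.filter_mono nhdsWithin_le_nhds
    have hev2' : ∀ᶠ φ : ℝ in 𝓝 (0:ℝ), |φ| < c0/(|C|+1) := by
      filter_upwards [Metric.eventually_nhds_iff.mpr ⟨_, hδpos, fun {y} hy => hy⟩] with φ hφ
      simpa [Real.dist_eq] using hφ
    have hev2 := hev2'.filter_mono (nhdsWithin_le_nhds (s := {(0:ℝ)}ᶜ))
    filter_upwards [hev1, hev2, eventually_mem_nhdsWithin] with φ h1 h2 h3
    have hφne : φ ≠ 0 := h3
    have h4 : (S10lam ((Sr:ℝ):ℂ) φ).re ≤ (S10mus ξ φ).re + ‖S10lam ((Sr:ℝ):ℂ) φ - S10mus ξ φ‖ := by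
      have h5 := Complex.re_le_norm (S10lam ((Sr:ℝ):ℂ) φ - S10mus ξ φ)
      have h5' : (S10lam ((Sr:ℝ):ℂ) φ - S10mus ξ φ).re
          = (S10lam ((Sr:ℝ):ℂ) φ).re - (S10mus ξ φ).re := by simp
      linarith
    have h6 : ‖|φ|^5‖ = |φ|^5 := by
      simp only [Real.norm_eq_abs]
      exact _root_.abs_of_nonneg (by positivity)
    rw [h6] at h1
    rw [hre φ] at h4
    have habs4 : |φ|^4 = φ^4 := by
      rw [← _root_.abs_pow]
      exact _root_.abs_of_nonneg (by positivity)
    have hab : 0 < |φ| := _root_.abs_pos.mpr hφne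
    have hC5 : C * |φ|^5 ≤ |C| * |φ|^5 :=
      mul_le_mul_of_nonneg_right (le_abs_self C) (by positivity)
    have h7 : |C| * |φ|^5 < c0 * φ^4 := by
      have h8 : |C| * |φ| < c0 := by
        calc |C| * |φ| ≤ (|C|+1) * |φ| := by nlinarith [abs_nonneg C, abs_nonneg φ]
          _ < (|C|+1) * (c0/(|C|+1)) := by
              exact mul_lt_mul_of_pos_left h2 (by positivity)
          _ = c0 := by field_simp
      calc |C| * |φ|^5 = (|C| * |φ|) * |φ|^4 := by ring
        _ < c0 * |φ|^4 := mul_lt_mul_of_pos_right h8 (by positivity)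
        _ = c0 * φ^4 := by rw [habs4]
    linarith
end

section
/- Consider the FV scheme based on second-order polynomial reconstruction on a mesh with alternating steps of structure γ = (ξ,−ξ), ξ ∈ [0,1): with the 2×2 matrices 2(9−ξ²)L_{−1} = [[3−4ξ+ξ², −18+10ξ],[0, 3+4ξ+ξ²]], 2(9−ξ²)L_0 = [[9−8ξ−ξ², 6+2ξ],[−18−10ξ, 9+8ξ−ξ²]], 2(9−ξ²)L_1 = [[0,0],[6−2ξ,0]], the symbol L(γ,φ) = L_{−1} e^{−2iφ} + L_0 + L_1 e^{2iφ} has an eigenvalue λ_0 with expansion λ_0(φ) = iφ + ((1−ξ²)/12) φ⁴ + O(φ⁵) as φ → 0, and the other eigenvalue satisfies λ_*(φ) = 12/(9−ξ²) + O(φ). In particular, Re λ_0(φ) > 0 for all sufficiently small φ ≠ 0 and every ξ ∈ [0,1). -/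
open Matrix Complex Filter Asymptotics
open scoped Real Topology

set_option maxHeartbeats 4000000

noncomputable def eFn (φ : ℝ) : ℂ := Complex.exp (-2*Complex.I*φ)
noncomputable def fFn (φ : ℝ) : ℂ := Complex.exp (2*Complex.I*φ)
noncomputable def TFn (x : ℂ) (φ : ℝ) : ℂ := ((6+2*x^2) * eFn φ + 18 - 2*x^2)/(2*(9-x^2))
noncomputable def DFn (x : ℂ) (φ : ℝ) : ℂ :=
  ((9-10*x^2+x^4)*(eFn φ)^2 + (-270+48*x^2-2*x^4)*eFn φ + (297-42*x^2+x^4)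
    + (-36+4*x^2)*fFn φ)/(2*(9-x^2))^2
noncomputable def T0Fn (x : ℂ) : ℂ := 12/(9-x^2)
noncomputable def gFn (x : ℂ) (φ : ℝ) : ℂ := ((TFn x φ)^2 - 4*DFn x φ)/(T0Fn x)^2
noncomputable def SFn (x : ℂ) (φ : ℝ) : ℂ := T0Fn x * (gFn x φ)^((1:ℂ)/2)
noncomputable def lamFn (x : ℂ) (φ : ℝ) : ℂ := (TFn x φ - SFn x φ)/2
noncomputable def lamSFn (x : ℂ) (φ : ℝ) : ℂ := (TFn x φ + SFn x φ)/2
noncomputable def PFn (x : ℂ) (φ : ℝ) : ℂ := Complex.I*φ + ((1 - x^2)/12)*(φ:ℂ)^4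
noncomputable def MatFn (x : ℂ) (φ : ℝ) : Matrix (Fin 2) (Fin 2) ℂ :=
  Complex.exp (-2 * Complex.I * φ) •
      ((1 / (2 * (9 - x ^ 2))) •
        !![3 - 4 * x + x ^ 2, -18 + 10 * x; 0, 3 + 4 * x + x ^ 2])
    + (1 / (2 * (9 - x ^ 2))) •
        !![9 - 8 * x - x ^ 2, 6 + 2 * x; -18 - 10 * x, 9 + 8 * x - x ^ 2]
    + Complex.exp (2 * Complex.I * φ) •
        ((1 / (2 * (9 - x ^ 2))) • !![0, 0; 6 - 2 * x, 0])

lemma keyE (x w e f : ℂ) (h9 : (9:ℂ) - x^2 ≠ 0) :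
    (Complex.I*w + ((1 - x^2)/12)*w^4)^2
      - (((6+2*x^2)*e + 18 - 2*x^2)/(2*(9-x^2))) * (Complex.I*w + ((1 - x^2)/12)*w^4)
      + ((9-10*x^2+x^4)*e^2 + (-270+48*x^2-2*x^4)*e + (297-42*x^2+x^4) + (-36+4*x^2)*f)/(2*(9-x^2))^2
    = (1/(2*(9-x^2))^2) * ( w^5 * (Complex.I*(-96*x^2 + (32/3)*x^4)
          + w*(18 - 14*x^2 - (14/3)*x^4 + (2/3)*x^6)
          + Complex.I*w^2*(-12 + (28/3)*x^2 + (28/9)*x^4 - (4/9)*x^6)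
          + w^3*(-(15/4) - (1/3)*x^2 + (29/6)*x^4 - (7/9)*x^6 + (1/36)*x^8))
        + (9-10*x^2+x^4) * (e^2 - (1 + (-4*Complex.I)*w + ((-4*Complex.I)*w)^2/2 + ((-4*Complex.I)*w)^3/6 + ((-4*Complex.I)*w)^4/24))
        + ((-270+48*x^2-2*x^4) + Complex.I*w*(-108-24*x^2+4*x^4) + w^4*(-9+7*x^2+(7/3)*x^4-(1/3)*x^6))
            * (e - (1 + (-2*Complex.I)*w + ((-2*Complex.I)*w)^2/2 + ((-2*Complex.I)*w)^3/6 + ((-2*Complex.I)*w)^4/24))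
        + (-36+4*x^2) * (f - (1 + (2*Complex.I)*w + ((2*Complex.I)*w)^2/2 + ((2*Complex.I)*w)^3/6 + ((2*Complex.I)*w)^4/24)) )
:= by
  have h2 : (2*(9-x^2)) ≠ 0 := by simpa using h9
  have h3 : (Complex.I:ℂ)^3 = -Complex.I := by simp [pow_succ, Complex.I_sq]
  have h4 : (Complex.I:ℂ)^4 = 1 := by simp [pow_succ, Complex.I_sq]
  have h5 : (Complex.I:ℂ)^5 = Complex.I := by simp [pow_succ, Complex.I_sq]
  have h6 : (Complex.I:ℂ)^6 = -1 := by simp [pow_succ, Complex.I_sq]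
  have h7 : (Complex.I:ℂ)^7 = -Complex.I := by simp [pow_succ, Complex.I_sq]
  have h8 : (Complex.I:ℂ)^8 = 1 := by simp [pow_succ, Complex.I_sq]
  field_simp
  ring_nf
  simp only [Complex.I_sq, h3, h4, h5, h6, h7, h8]
  ring

lemma expTaylor5 (c : ℂ) :
    (fun φ : ℝ => Complex.exp (c*φ) - (1 + c*φ + (c*(φ:ℂ))^2/2 + (c*(φ:ℂ))^3/6 + (c*(φ:ℂ))^4/24))
      =O[𝓝 (0:ℝ)] fun φ => |φ|^5 := by
  rw [Asymptotics.isBigO_iff]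
  refine ⟨‖c‖ ^ 5, ?_⟩
  have ht : Tendsto (fun φ:ℝ => ‖c‖ * |φ|) (𝓝 0) (𝓝 0) := by
    have h0 : Tendsto (fun φ:ℝ => |φ|) (𝓝 0) (𝓝 0) := by
      simpa using (_root_.continuous_abs.tendsto (0:ℝ))
    simpa using h0.const_mul (‖c‖)
  filter_upwards [ht.eventually (eventually_le_nhds one_pos)] with φ hφ
  have hφ' : ‖c*(φ:ℂ)‖ ≤ 1 := by
    simpa [norm_mul] using hφ
  have hb := Complex.exp_bound hφ' (n := 5) (by norm_num)
  have hsum : ∑ m ∈ Finset.range 5, (c*(φ:ℂ))^m/(m.factorial : ℂ)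
      = 1 + c*φ + (c*(φ:ℂ))^2/2 + (c*(φ:ℂ))^3/6 + (c*(φ:ℂ))^4/24 := by
    simp [Finset.sum_range_succ, Nat.factorial]
  rw [hsum] at hb
  have habs : ‖c*(φ:ℂ)‖ = ‖c‖ * |φ| := by
    simp [norm_mul]
  refine le_trans hb ?_
  have h3 : ‖|φ|^5‖ = |φ|^5 := by
    simp [Real.norm_eq_abs, _root_.abs_of_nonneg (pow_nonneg (abs_nonneg φ) 5)]
  rw [h3, habs, mul_pow]
  have h1 : ((Nat.succ 5 : ℝ) * ((Nat.factorial 5 : ℝ) * (5:ℝ))⁻¹) ≤ 1 := by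
    norm_num [Nat.factorial]
  have h2 : (0:ℝ) ≤ ‖c‖ ^ 5 * |φ|^5 := by positivity
  nlinarith

lemma expAnalytic (c : ℂ) : AnalyticAt ℝ (fun φ : ℝ => Complex.exp (c * φ)) 0 := by
  have h1 : AnalyticAt ℂ (fun z : ℂ => Complex.exp (c * z)) (((0:ℝ)):ℂ) :=
    (analyticAt_const.mul analyticAt_id).cexp
  have h2 := (h1.restrictScalars (𝕜 := ℝ)).comp (Complex.ofRealCLM.analyticAt (0:ℝ))
  exact h2

lemma detScalar (x u v mu : ℂ) (h9 : (9:ℂ) - x^2 ≠ 0) (huv : u * v = 1) :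
    (mu - (u * (3-4*x+x^2) + (9-8*x-x^2)) / (2*(9-x^2)))
        * (mu - (u * (3+4*x+x^2) + (9+8*x-x^2)) / (2*(9-x^2)))
      - ((u * (-18+10*x) + (6+2*x)) / (2*(9-x^2))) * ((-18-10*x + v * (6-2*x)) / (2*(9-x^2)))
    = mu^2 - (((6+2*x^2) * u + 18 - 2*x^2)/(2*(9-x^2))) * mu
      + ((9-10*x^2+x^4)*u^2 + (-270+48*x^2-2*x^4)*u + (297-42*x^2+x^4)
          + (-36+4*x^2)*v)/(2*(9-x^2))^2 := by
  have h2 : (2*(9-x^2)) ≠ 0 := by simpa using h9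
  field_simp
  linear_combination (-((-18+10*x)*(6-2*x))) * huv

lemma detMatFn (x : ℂ) (h9 : (9:ℂ) - x^2 ≠ 0) (φ : ℝ) (μ : ℂ) :
    Matrix.det (algebraMap ℂ (Matrix (Fin 2) (Fin 2) ℂ) μ - MatFn x φ)
      = μ^2 - TFn x φ * μ + DFn x φ := by
  have h18 : (18:ℂ) - x^2*2 ≠ 0 := fun h => h9 (by linear_combination h/2)
  have hef : eFn φ * fFn φ = 1 := by
    rw [eFn, fFn, ← Complex.exp_add, show (-2*Complex.I*(φ:ℂ) + 2*Complex.I*φ) = 0 by ring,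
      Complex.exp_zero]
  have hM : MatFn x φ =
      !![(eFn φ * (3-4*x+x^2) + (9-8*x-x^2)) / (2*(9-x^2)),
         (eFn φ * (-18+10*x) + (6+2*x)) / (2*(9-x^2));
         ((-18-10*x) + fFn φ * (6-2*x)) / (2*(9-x^2)),
         (eFn φ * (3+4*x+x^2) + (9+8*x-x^2)) / (2*(9-x^2))] := by
    ext i j
    fin_cases i <;> fin_cases j <;>
      simp [MatFn, eFn, fFn, Matrix.add_apply, Matrix.smul_apply, smul_eq_mul] <;>
      field_simp <;> (first | (left; ring) | ring)
  have hA : algebraMap ℂ (Matrix (Fin 2) (Fin 2) ℂ) μ = !![μ, 0; 0, μ] := by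
    ext i j
    fin_cases i <;> fin_cases j <;> simp [Matrix.algebraMap_matrix_apply]
  rw [hM, hA, Matrix.det_fin_two]
  simp only [Matrix.sub_apply, Matrix.cons_val', Matrix.cons_val_zero, Matrix.cons_val_one,
    Matrix.head_cons, Matrix.head_fin_const, Matrix.empty_val', Matrix.cons_val_fin_one,
    Matrix.of_apply, zero_sub, neg_mul_neg]
  rw [TFn, DFn]
  exact detScalar x (eFn φ) (fFn φ) μ h9 hef

lemma memSpec (x : ℂ) (h9 : (9:ℂ) - x^2 ≠ 0) (φ : ℝ) (μ : ℂ)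
    (h : μ^2 - TFn x φ * μ + DFn x φ = 0) : μ ∈ spectrum ℂ (MatFn x φ) := by
  rw [spectrum.mem_iff]
  intro hu
  have hd := (Matrix.isUnit_iff_isUnit_det _).mp hu
  rw [detMatFn x h9 φ μ, h] at hd
  exact hd.ne_zero rfl

set_option linter.unreachableTactic false
set_option linter.unusedTactic false

/-- For the FV scheme with second-order polynomial reconstruction on a
period-2 mesh with structure `(ξ, −ξ)`, `ξ ∈ [0,1)`, the symbol
`L(γ,φ) = L₋₁e^{−2iφ} + L₀ + L₁e^{2iφ}` has an analytic eigenvalue branch `λ₀` with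
`λ₀(φ) = iφ + ((1−ξ²)/12)φ⁴ + O(φ⁵)`, and another eigenvalue branch
`λ_*(φ) = 12/(9−ξ²) + O(φ)`. In particular `Re λ₀(φ) > 0` for all sufficiently small
`φ ≠ 0`. -/
theorem stmt_12 (ξ : ℝ) (hξ : ξ ∈ Set.Ico (0 : ℝ) 1) :
    ∃ lam lamStar : ℝ → ℂ,
      AnalyticAt ℝ lam 0 ∧ AnalyticAt ℝ lamStar 0 ∧ lam 0 = 0 ∧
      (∀ᶠ φ : ℝ in 𝓝 0, lam φ ∈ spectrum ℂ
        (Complex.exp (-2 * Complex.I * φ) •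
            ((1 / (2 * (9 - (ξ : ℂ) ^ 2))) •
              !![3 - 4 * (ξ : ℂ) + (ξ : ℂ) ^ 2, -18 + 10 * (ξ : ℂ);
                 0, 3 + 4 * (ξ : ℂ) + (ξ : ℂ) ^ 2])
          + (1 / (2 * (9 - (ξ : ℂ) ^ 2))) •
              !![9 - 8 * (ξ : ℂ) - (ξ : ℂ) ^ 2, 6 + 2 * (ξ : ℂ);
                 -18 - 10 * (ξ : ℂ), 9 + 8 * (ξ : ℂ) - (ξ : ℂ) ^ 2]
          + Complex.exp (2 * Complex.I * φ) •
              ((1 / (2 * (9 - (ξ : ℂ) ^ 2))) • !![0, 0; 6 - 2 * (ξ : ℂ), 0]))) ∧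
      (∀ᶠ φ : ℝ in 𝓝 0, lamStar φ ∈ spectrum ℂ
        (Complex.exp (-2 * Complex.I * φ) •
            ((1 / (2 * (9 - (ξ : ℂ) ^ 2))) •
              !![3 - 4 * (ξ : ℂ) + (ξ : ℂ) ^ 2, -18 + 10 * (ξ : ℂ);
                 0, 3 + 4 * (ξ : ℂ) + (ξ : ℂ) ^ 2])
          + (1 / (2 * (9 - (ξ : ℂ) ^ 2))) •
              !![9 - 8 * (ξ : ℂ) - (ξ : ℂ) ^ 2, 6 + 2 * (ξ : ℂ);
                 -18 - 10 * (ξ : ℂ), 9 + 8 * (ξ : ℂ) - (ξ : ℂ) ^ 2]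
          + Complex.exp (2 * Complex.I * φ) •
              ((1 / (2 * (9 - (ξ : ℂ) ^ 2))) • !![0, 0; 6 - 2 * (ξ : ℂ), 0]))) ∧
      ((fun φ : ℝ => lam φ -
          (Complex.I * φ + ((1 - (ξ : ℂ) ^ 2) / 12) * (φ : ℂ) ^ 4))
        =O[𝓝 (0 : ℝ)] fun φ => |φ| ^ 5) ∧
      ((fun φ : ℝ => lamStar φ - 12 / (9 - (ξ : ℂ) ^ 2))
        =O[𝓝 (0 : ℝ)] fun φ => |φ|) ∧
      (∀ᶠ φ : ℝ in 𝓝[≠] 0, 0 < (lam φ).re) := by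
  obtain ⟨hξ0, hξ1⟩ := hξ
  have hx1 : (0:ℝ) < 1 - ξ^2 := by nlinarith
  set x : ℂ := (ξ : ℂ) with hxdef
  have h9 : (9:ℂ) - x^2 ≠ 0 := by
    rw [hxdef, show (9:ℂ) - (ξ:ℂ)^2 = ((9 - ξ^2 : ℝ) : ℂ) by push_cast; ring]
    exact_mod_cast (by nlinarith : (9:ℝ) - ξ^2 ≠ 0)
  have h2 : (2:ℂ)*(9-x^2) ≠ 0 := by simpa using h9
  have hT0 : T0Fn x ≠ 0 := div_ne_zero (by norm_num) h9
  -- values at 0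
  have heFn0 : eFn 0 = 1 := by
    rw [eFn]; norm_num
  have hfFn0 : fFn 0 = 1 := by
    rw [fFn]; norm_num
  have hTf0 : TFn x 0 = T0Fn x := by
    rw [TFn, heFn0, T0Fn]; field_simp; ring
  have hDf0 : DFn x 0 = 0 := by
    rw [DFn, heFn0, hfFn0]; ring_nf
  have hg0 : gFn x 0 = 1 := by
    rw [gFn, hTf0, hDf0]
    field_simp
    ring
  have hS0 : SFn x 0 = T0Fn x := by
    rw [SFn, hg0, Complex.one_cpow, mul_one]
  have hlam0 : lamFn x 0 = 0 := by
    rw [lamFn, hTf0, hS0]; ring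
  have hlamS0 : lamSFn x 0 = T0Fn x := by
    rw [lamSFn, hTf0, hS0]; ring
  -- analyticity
  have hea : AnalyticAt ℝ eFn 0 := expAnalytic (-2*Complex.I)
  have hfa : AnalyticAt ℝ fFn 0 := expAnalytic (2*Complex.I)
  have hTa : AnalyticAt ℝ (TFn x) 0 := by
    exact ((analyticAt_const.mul hea).add analyticAt_const |>.sub analyticAt_const).div
      analyticAt_const h2
  have hDa : AnalyticAt ℝ (DFn x) 0 := by
    exact ((((analyticAt_const.mul (hea.pow 2)).add (analyticAt_const.mul hea)).add
      analyticAt_const |>.add (analyticAt_const.mul hfa)).div analyticAt_const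
      (pow_ne_zero 2 h2))
  have hga : AnalyticAt ℝ (gFn x) 0 := by
    exact (((hTa.pow 2).sub (analyticAt_const.mul hDa)).div analyticAt_const
      (pow_ne_zero 2 hT0))
  have hcpa : AnalyticAt ℂ (fun z : ℂ => z ^ ((1:ℂ)/2)) (gFn x 0) := by
    rw [hg0]
    exact analyticAt_id.cpow analyticAt_const (by simp [Complex.mem_slitPlane_iff])
  have hSa : AnalyticAt ℝ (SFn x) 0 := by
    have := (hcpa.restrictScalars (𝕜 := ℝ)).comp hga
    exact analyticAt_const.mul this
  have hlama : AnalyticAt ℝ (lamFn x) 0 := (hTa.sub hSa).div analyticAt_const two_ne_zero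
  have hlamSa : AnalyticAt ℝ (lamSFn x) 0 := (hTa.add hSa).div analyticAt_const two_ne_zero
  -- eventual facts
  have hgne : ∀ᶠ φ : ℝ in 𝓝 0, gFn x φ ≠ 0 :=
    hga.continuousAt.eventually_ne (by rw [hg0]; exact one_ne_zero)
  have hS2 : ∀ᶠ φ : ℝ in 𝓝 0, (SFn x φ)^2 = (TFn x φ)^2 - 4*DFn x φ := by
    filter_upwards [hgne] with φ hne
    have hsq : ((gFn x φ) ^ ((1:ℂ)/2))^2 = gFn x φ := by
      rw [sq, ← Complex.cpow_add _ _ hne]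
      norm_num
    have : (SFn x φ)^2 = (T0Fn x)^2 * gFn x φ := by rw [SFn, mul_pow, hsq]
    rw [this, gFn]
    field_simp
  have hclam : ∀ᶠ φ : ℝ in 𝓝 0, (lamFn x φ)^2 - TFn x φ * lamFn x φ + DFn x φ = 0 := by
    filter_upwards [hS2] with φ h
    rw [lamFn]; linear_combination h/4
  have hclamS : ∀ᶠ φ : ℝ in 𝓝 0, (lamSFn x φ)^2 - TFn x φ * lamSFn x φ + DFn x φ = 0 := by
    filter_upwards [hS2] with φ h
    rw [lamSFn]; linear_combination h/4
  -- E bound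
  have hBIG : (fun φ : ℝ => PFn x φ^2 - TFn x φ * PFn x φ + DFn x φ)
      =O[𝓝 (0:ℝ)] fun φ => |φ|^5 := by
    have hQt : Tendsto (fun φ : ℝ => (Complex.I*(-96*x^2 + (32/3)*x^4)
          + (φ:ℂ)*(18 - 14*x^2 - (14/3)*x^4 + (2/3)*x^6)
          + Complex.I*(φ:ℂ)^2*(-12 + (28/3)*x^2 + (28/9)*x^4 - (4/9)*x^6)
          + (φ:ℂ)^3*(-(15/4) - (1/3)*x^2 + (29/6)*x^4 - (7/9)*x^6 + (1/36)*x^8)))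
        (𝓝 0) (𝓝 _) :=
      (Continuous.tendsto (by continuity) 0)
    have h5 : (fun φ : ℝ => ((φ:ℂ))^5) =O[𝓝 (0:ℝ)] fun φ => |φ|^5 := by
      apply Asymptotics.isBigO_of_le
      intro φ
      simp [Real.norm_eq_abs, _root_.abs_of_nonneg (pow_nonneg (abs_nonneg φ) 5), abs_pow]
    have t0 := h5.mul (hQt.isBigO_one ℝ)
    rw [show (fun φ:ℝ => |φ|^5 * 1) = fun φ:ℝ => |φ|^5 by funext φ; ring] at t0
    have hQ1 : Tendsto (fun φ : ℝ => ((-270+48*x^2-2*x^4) + Complex.I*(φ:ℂ)*(-108-24*x^2+4*x^4)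
          + (φ:ℂ)^4*(-9+7*x^2+(7/3)*x^4-(1/3)*x^6))) (𝓝 0) (𝓝 _) :=
      (Continuous.tendsto (by continuity) 0)
    have t2 := (hQ1.isBigO_one ℝ).mul (expTaylor5 (-2*Complex.I))
    rw [show (fun φ:ℝ => (1:ℝ) * |φ|^5) = fun φ:ℝ => |φ|^5 by funext φ; ring] at t2
    have t1 := (expTaylor5 (-4*Complex.I)).const_mul_left ((9:ℂ)-10*x^2+x^4)
    have t3 := (expTaylor5 (2*Complex.I)).const_mul_left ((-36:ℂ)+4*x^2)
    have tsum := (((t0.add t1).add t2).add t3).const_mul_left ((1:ℂ)/(2*(9-x^2))^2)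
    refine tsum.congr' ?_ (by rfl)
    filter_upwards with φ
    have hk := keyE x (φ:ℂ) (eFn φ) (fFn φ) h9
    have he2 : (eFn φ)^2 = Complex.exp (-4*Complex.I*(φ:ℂ)) := by
      rw [eFn, sq, ← Complex.exp_add]
      congr 1
      ring
    rw [PFn, TFn, DFn, eFn, fFn] at *
    rw [hk, he2]
  -- lam - P
  have hP0 : PFn x 0 = 0 := by rw [PFn]; norm_num
  have hPc : ContinuousAt (PFn x) 0 := by
    apply Continuous.continuousAt
    rw [show PFn x = fun φ:ℝ => Complex.I*(φ:ℂ) + ((1 - x^2)/12)*(φ:ℂ)^4 from rfl]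
    continuity
  have hh : Tendsto (fun φ : ℝ => lamFn x φ + PFn x φ - TFn x φ) (𝓝 0) (𝓝 (-(T0Fn x))) := by
    have := (hlama.continuousAt.tendsto.add hPc.tendsto).sub hTa.continuousAt.tendsto
    rw [hlam0, hP0, hTf0] at this
    simpa using this
  have hhn : ∀ᶠ φ : ℝ in 𝓝 0, ‖T0Fn x‖/2 ≤ ‖lamFn x φ + PFn x φ - TFn x φ‖ := by
    have h1 : ‖T0Fn x‖/2 < ‖-(T0Fn x)‖ := by
      rw [norm_neg]
      have : 0 < ‖T0Fn x‖ := norm_pos_iff.mpr hT0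
      linarith
    exact hh.norm.eventually (eventually_ge_nhds h1)
  have hr : (fun φ : ℝ => lamFn x φ - PFn x φ)
      =O[𝓝 (0:ℝ)] (fun φ : ℝ => PFn x φ^2 - TFn x φ * PFn x φ + DFn x φ) := by
    rw [Asymptotics.isBigO_iff]
    refine ⟨2/‖T0Fn x‖, ?_⟩
    filter_upwards [hclam, hhn] with φ hc hb
    have hprod : (lamFn x φ - PFn x φ) * (lamFn x φ + PFn x φ - TFn x φ)
        = -(PFn x φ^2 - TFn x φ * PFn x φ + DFn x φ) := by linear_combination hc
    have hnp : ‖lamFn x φ - PFn x φ‖ * ‖lamFn x φ + PFn x φ - TFn x φ‖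
        = ‖PFn x φ^2 - TFn x φ * PFn x φ + DFn x φ‖ := by
      rw [← norm_mul, hprod, norm_neg]
    have ht : (0:ℝ) < ‖T0Fn x‖ := norm_pos_iff.mpr hT0
    have ha : (0:ℝ) ≤ ‖lamFn x φ - PFn x φ‖ := norm_nonneg _
    rw [div_mul_eq_mul_div, le_div_iff₀ ht]
    nlinarith
  have hOlam := hr.trans hBIG
  -- lamStar O(|φ|)
  have hOlamS : (fun φ : ℝ => lamSFn x φ - 12 / (9 - x^2)) =O[𝓝 (0:ℝ)] fun φ => |φ| := by
    have hd := (hlamSa.differentiableAt).isBigO_sub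
    rw [hlamS0] at hd
    have habs : (fun φ : ℝ => φ - 0) =O[𝓝 (0:ℝ)] fun φ => |φ| := by
      apply Asymptotics.isBigO_of_le
      intro φ
      simp [Real.norm_eq_abs]
    exact (hd.trans habs)
  -- positivity
  have hpos : ∀ᶠ φ : ℝ in 𝓝[≠] (0:ℝ), 0 < (lamFn x φ).re := by
    obtain ⟨C, hCpos, hC⟩ := hOlam.exists_pos
    have hCb := hC.bound
    have hδ : (0:ℝ) < (1-ξ^2)/(12*C) := by positivity
    have hsmall : ∀ᶠ φ : ℝ in 𝓝 (0:ℝ), |φ| < (1-ξ^2)/(12*C) := by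
      filter_upwards [Metric.ball_mem_nhds (0:ℝ) hδ] with φ hφ
      simpa [Real.dist_eq] using hφ
    have hev := (hCb.and hsmall).filter_mono (nhdsWithin_le_nhds (s := {(0:ℝ)}ᶜ))
    filter_upwards [hev, self_mem_nhdsWithin] with φ hφ hne
    obtain ⟨hb, hs⟩ := hφ
    have hPre : (PFn x φ).re = (1-ξ^2)/12*φ^4 := by
      have : PFn x φ = Complex.I*(φ:ℂ) + (((1-ξ^2)/12*φ^4 : ℝ) : ℂ) := by
        rw [PFn, hxdef]; push_cast; ring
      rw [this, Complex.add_re, Complex.ofReal_re]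
      simp [Complex.mul_re]
    have hrre : |(lamFn x φ - PFn x φ).re| ≤ C * |φ|^5 := by
      refine le_trans (Complex.abs_re_le_norm _) ?_
      have hnn : ‖|φ|^5‖ = |φ|^5 := by
        simp [Real.norm_eq_abs, _root_.abs_of_nonneg (pow_nonneg (abs_nonneg φ) 5)]
      calc ‖lamFn x φ - PFn x φ‖ = ‖lamFn x φ - PFn x φ‖ := rfl
        _ ≤ C * ‖|φ|^5‖ := hb
        _ = C * |φ|^5 := by rw [hnn]
    have hlre : (lamFn x φ).re = (1-ξ^2)/12*φ^4 + (lamFn x φ - PFn x φ).re := by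
      rw [Complex.sub_re, hPre]; ring
    have habs0 : 0 < |φ| := abs_pos.mpr hne
    have hp4 : |φ|^4 = φ^4 := by
      rw [← _root_.abs_pow]; exact _root_.abs_of_nonneg (by positivity)
    have h55 : |φ|^5 = |φ| * |φ|^4 := by ring
    rw [hlre]
    have h1 : C * |φ|^5 < (1-ξ^2)/12 * φ^4 := by
      rw [h55, hp4]
      have h2' : C * |φ| < C * ((1-ξ^2)/(12*C)) := by
        exact mul_lt_mul_of_pos_left hs hCpos
      have h3' : C * ((1-ξ^2)/(12*C)) = (1-ξ^2)/12 := by field_simp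
      have hp4pos : 0 < φ^4 := by
        have hφ0 : φ ≠ 0 := hne
        positivity
      nlinarith
    have h2 : -(C * |φ|^5) ≤ (lamFn x φ - PFn x φ).re := neg_le_of_abs_le hrre
    linarith
  -- assemble
  refine ⟨lamFn x, lamSFn x, hlama, hlamSa, hlam0, ?_, ?_, hOlam, hOlamS, hpos⟩
  · filter_upwards [hclam] with φ hc
    exact memSpec x h9 φ _ hc
  · filter_upwards [hclamS] with φ hc
    exact memSpec x h9 φ _ hc
end
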